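/- For any probability measures P and Q, the map ε ↦ H²(P, (1−ε)P + εQ) is nondecreasing on [0,1]; more precisely, for 0 ≤ ε < ε′ ≤ 1, H²((1−ε)P + εQ, P) ≤ (ε/ε′)·H²((1−ε′)P + ε′Q, P). -/

import Mathlib

open MeasureTheory

/-- The squared Hellinger distance `H²(P,Q)`, computed with the dominating measure `P + Q`. -/
noncomputable def sqHellinger {α : Type*} [MeasurableSpace α] (P Q : Measure α) : ℝ :=
  ∫ x, (Real.sqrt ((Measure.rnDeriv P (P + Q)) x).toReal
      - Real.sqrt ((Measure.rnDeriv Q (P + Q)) x).toReal) ^ 2 ∂(P + Q)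

/-!
Write `M_ε = (1-ε)P + εQ`. For `ε < ε'` and `t = ε/ε'` one has `M_ε = t M_{ε'} + (1-t) P`.
Since `H²(·, P)` is convex and vanishes at `P`, `H²(t M + (1-t) P, P) ≤ t H²(M, P)`; pointwise
in densities this is the convexity of `a ↦ (√a - √b)²`, i.e. the concavity of the square root.
Monotonicity follows from `t ≤ 1` and the symmetry of `H²`.
-/

open ENNReal (ofReal)

lemma sq_sqrt_sub_sqrt_le_add {a b : ℝ} (ha : 0 ≤ a) (hb : 0 ≤ b) :
    (√a - √b) ^ 2 ≤ a + b := by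
  nlinarith [Real.sq_sqrt ha, Real.sq_sqrt hb, mul_nonneg (Real.sqrt_nonneg a) (Real.sqrt_nonneg b)]

lemma sq_sqrt_convexComb_sub_sqrt_le {t a b : ℝ} (ht0 : 0 ≤ t) (ht1 : t ≤ 1) (ha : 0 ≤ a)
    (hb : 0 ≤ b) : (√(t * a + (1 - t) * b) - √b) ^ 2 ≤ t * (√a - √b) ^ 2 := by
  have hmix : 0 ≤ t * a + (1 - t) * b := by nlinarith
  have hconc : t * √a + (1 - t) * √b ≤ √(t * a + (1 - t) * b) :=
    Real.strictConcaveOn_sqrt.concaveOn.2 ha hb ht0 (sub_nonneg.2 ht1) (by ring)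
  nlinarith [Real.sq_sqrt ha, Real.sq_sqrt hb, Real.sq_sqrt hmix,
    mul_le_mul_of_nonneg_left hconc (Real.sqrt_nonneg b)]

section Hellinger

variable {α : Type*} [MeasurableSpace α]

instance isFiniteMeasure_ofReal_smul (μ : Measure α) [IsFiniteMeasure μ] (a : ℝ) :
    IsFiniteMeasure (ofReal a • μ) :=
  μ.smul_finite ENNReal.ofReal_ne_top

lemma integrable_sq_sqrt_rnDeriv_sub_sqrt_rnDeriv (μ ν σ : Measure α) [IsFiniteMeasure μ]
    [IsFiniteMeasure ν] :
    Integrable (fun x ↦ (√(μ.rnDeriv σ x).toReal - √(ν.rnDeriv σ x).toReal) ^ 2) σ := by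
  refine ((Measure.integrable_toReal_rnDeriv (μ := μ)).add
    (Measure.integrable_toReal_rnDeriv (μ := ν))).mono' ?_
    (ae_of_all _ fun x ↦ ?_)
  · exact ((((μ.measurable_rnDeriv σ).ennreal_toReal.sqrt).sub
      (ν.measurable_rnDeriv σ).ennreal_toReal.sqrt).pow_const 2).aestronglyMeasurable
  · rw [Real.norm_of_nonneg (sq_nonneg _)]
    exact sq_sqrt_sub_sqrt_le_add ENNReal.toReal_nonneg ENNReal.toReal_nonneg

lemma sqHellinger_eq_integral_of_absolutelyContinuous {μ ν σ : Measure α} [IsFiniteMeasure μ]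
    [IsFiniteMeasure ν] [SigmaFinite σ] (hμ : μ ≪ σ) (hν : ν ≪ σ) :
    sqHellinger μ ν = ∫ x, (√(μ.rnDeriv σ x).toReal - √(ν.rnDeriv σ x).toReal) ^ 2 ∂σ := by
  rw [sqHellinger, ← integral_rnDeriv_smul (hμ.add_left hν)]
  refine integral_congr_ae ?_
  have hμ_sum : μ ≪ μ + ν := Measure.AbsolutelyContinuous.rfl.add_right ν
  have hν_sum : ν ≪ μ + ν := Measure.AbsolutelyContinuous.rfl.add_right' μ
  filter_upwards [Measure.rnDeriv_mul_rnDeriv (κ := σ) hμ_sum,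
    Measure.rnDeriv_mul_rnDeriv (κ := σ) hν_sum]
    with x hμx hνx
  rw [← hμx, ← hνx, Pi.mul_apply, Pi.mul_apply, ENNReal.toReal_mul, ENNReal.toReal_mul,
    Real.sqrt_mul ENNReal.toReal_nonneg, Real.sqrt_mul ENNReal.toReal_nonneg, smul_eq_mul]
  linear_combination -(√(μ.rnDeriv (μ + ν) x).toReal - √(ν.rnDeriv (μ + ν) x).toReal) ^ 2 *
    Real.sq_sqrt (ENNReal.toReal_nonneg (a := (μ + ν).rnDeriv σ x))

lemma sqHellinger_comm (μ ν : Measure α) : sqHellinger μ ν = sqHellinger ν μ := by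
  rw [sqHellinger, sqHellinger, add_comm ν μ]
  congr 1 with x
  ring

lemma sqHellinger_nonneg (μ ν : Measure α) : 0 ≤ sqHellinger μ ν :=
  integral_nonneg fun _ ↦ sq_nonneg _

lemma toReal_rnDeriv_ofReal_smul_add_ofReal_smul (μ ν σ : Measure α) [IsFiniteMeasure μ]
    [IsFiniteMeasure ν] [SigmaFinite σ] {a b : ℝ} (ha : 0 ≤ a) (hb : 0 ≤ b) :
    ∀ᵐ x ∂σ, ((ofReal a • μ + ofReal b • ν).rnDeriv σ x).toReal
      = a * (μ.rnDeriv σ x).toReal + b * (ν.rnDeriv σ x).toReal := by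
  filter_upwards [Measure.rnDeriv_add (ofReal a • μ) (ofReal b • ν) σ,
    μ.rnDeriv_smul_left_of_ne_top σ ENNReal.ofReal_ne_top,
    ν.rnDeriv_smul_left_of_ne_top σ ENNReal.ofReal_ne_top,
    μ.rnDeriv_lt_top σ, ν.rnDeriv_lt_top σ] with x hadd hμx hνx hμ_lt hν_lt
  rw [hadd, Pi.add_apply, hμx, hνx, Pi.smul_apply, Pi.smul_apply, smul_eq_mul, smul_eq_mul,
    ENNReal.toReal_add (ENNReal.mul_ne_top ENNReal.ofReal_ne_top hμ_lt.ne)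
      (ENNReal.mul_ne_top ENNReal.ofReal_ne_top hν_lt.ne),
    ENNReal.toReal_mul, ENNReal.toReal_mul, ENNReal.toReal_ofReal ha, ENNReal.toReal_ofReal hb]

theorem sqHellinger_convexComb_left_le (μ ν : Measure α) [IsFiniteMeasure μ] [IsFiniteMeasure ν]
    {t : ℝ} (ht0 : 0 ≤ t) (ht1 : t ≤ 1) :
    sqHellinger (ofReal t • μ + ofReal (1 - t) • ν) ν ≤ t * sqHellinger μ ν := by
  have hμ : μ ≪ μ + ν := Measure.AbsolutelyContinuous.rfl.add_right ν
  have hν : ν ≪ μ + ν := Measure.AbsolutelyContinuous.rfl.add_right' μ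
  rw [sqHellinger_eq_integral_of_absolutelyContinuous
      ((hμ.smul_left _).add_left (hν.smul_left _)) hν,
    sqHellinger_eq_integral_of_absolutelyContinuous hμ hν, ← integral_const_mul]
  refine integral_mono_of_nonneg (ae_of_all _ fun _ ↦ sq_nonneg _)
    ((integrable_sq_sqrt_rnDeriv_sub_sqrt_rnDeriv μ ν _).const_mul t) ?_
  filter_upwards [toReal_rnDeriv_ofReal_smul_add_ofReal_smul μ ν (μ + ν) ht0 (sub_nonneg.2 ht1)]
    with x hx
  rw [hx]
  exact sq_sqrt_convexComb_sub_sqrt_le ht0 ht1 ENNReal.toReal_nonneg ENNReal.toReal_nonneg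

lemma ofReal_smul_add_ofReal_smul_eq_of_lt (P Q : Measure α) {ε ε' : ℝ} (hε : 0 ≤ ε)
    (hεε' : ε < ε') (hε' : ε' ≤ 1) :
    ofReal (1 - ε) • P + ofReal ε • Q
      = ofReal (ε / ε') • (ofReal (1 - ε') • P + ofReal ε' • Q) + ofReal (1 - ε / ε') • P := by
  have hε'_pos : 0 < ε' := hε.trans_lt hεε'
  have ht0 : 0 ≤ ε / ε' := div_nonneg hε hε'_pos.le
  have ht1 : 0 ≤ 1 - ε / ε' := sub_nonneg.2 (div_le_one_of_le₀ hεε'.le hε'_pos.le)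
  rw [smul_add, smul_smul, smul_smul, ← ENNReal.ofReal_mul ht0, ← ENNReal.ofReal_mul ht0,
    add_right_comm, ← add_smul, ← ENNReal.ofReal_add (mul_nonneg ht0 (sub_nonneg.2 hε')) ht1]
  congr 3 <;> field_simp; ring

end Hellinger

/-- `ε ↦ H²(P, (1−ε)P + εQ)` is nondecreasing on `[0,1]`; more precisely, for
`0 ≤ ε < ε′ ≤ 1`, `H²((1−ε)P + εQ, P) ≤ (ε/ε′)·H²((1−ε′)P + ε′Q, P)`. -/
theorem stmt8 {α : Type*} [MeasurableSpace α] (P Q : Measure α)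
    [IsProbabilityMeasure P] [IsProbabilityMeasure Q] :
    MonotoneOn (fun ε : ℝ =>
        sqHellinger P (ENNReal.ofReal (1 - ε) • P + ENNReal.ofReal ε • Q)) (Set.Icc 0 1) ∧
    ∀ ε ε' : ℝ, 0 ≤ ε → ε < ε' → ε' ≤ 1 →
      sqHellinger (ENNReal.ofReal (1 - ε) • P + ENNReal.ofReal ε • Q) P
        ≤ (ε / ε') * sqHellinger (ENNReal.ofReal (1 - ε') • P + ENNReal.ofReal ε' • Q) P := by
  have key : ∀ ε ε' : ℝ, 0 ≤ ε → ε < ε' → ε' ≤ 1 →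
      sqHellinger (ofReal (1 - ε) • P + ofReal ε • Q) P
        ≤ (ε / ε') * sqHellinger (ofReal (1 - ε') • P + ofReal ε' • Q) P := by
    intro ε ε' hε hεε' hε'
    have hε'_pos : 0 < ε' := hε.trans_lt hεε'
    rw [ofReal_smul_add_ofReal_smul_eq_of_lt P Q hε hεε' hε']
    exact sqHellinger_convexComb_left_le _ P (div_nonneg hε hε'_pos.le)
      (div_le_one_of_le₀ hεε'.le hε'_pos.le)
  refine ⟨fun ε hε ε' hε' hle ↦ ?_, key⟩
  rcases hle.eq_or_lt with rfl | hεε'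
  · exact le_rfl
  simp only [sqHellinger_comm P]
  calc _ ≤ (ε / ε') * sqHellinger (ofReal (1 - ε') • P + ofReal ε' • Q) P :=
        key ε ε' hε.1 hεε' hε'.2
    _ ≤ _ := mul_le_of_le_one_left (sqHellinger_nonneg _ _)
        (div_le_one_of_le₀ hεε'.le (hε.1.trans hεε'.le))
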